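/- Let M be a K × K real matrix that is entrywise nonnegative and irreducible (for all indices i, j there exists k ≥ 1 with (M^k) i j > 0), let X : Fin K → ℝ be entrywise strictly positive, and let Y : Fin K → ℝ be entrywise nonnegative and nonzero, with X = M.mulVec X + Y. Then every complex eigenvalue of the complexification of M has modulus strictly less than 1, the matrix I − M is invertible, and X = (I − M)⁻¹.mulVec Y; in particular X is the unique solution of the equation Z = M.mulVec Z + Y. -/

import Mathlib

/-!
Unrolling `X = M X + Y` gives `X = M^N X + ∑_{m<N} M^m Y`; by irreducibility every coordinate
of the sum is positive once `N` is large, so `M^N X < X` entrywise. For an eigenpair `(λ, v)`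
of `M` one has `|λ|^N |v| ≤ M^N |v|`, and evaluating at a coordinate where `|v|` touches its
smallest dominating multiple `c X` of the positive vector `X` forces `|λ|^N < 1`. In particular
`1` is not an eigenvalue, so `I - M` is invertible and `(I - M)⁻¹ Y` is the only solution.
-/

open Finset

namespace Matrix

variable {n R : Type*} [Fintype n]

lemma mulVec_le_mulVec_of_nonneg [Semiring R] [PartialOrder R] [IsOrderedRing R]
    {A : Matrix n n R} (hA : ∀ i j, 0 ≤ A i j) {u v : n → R} (huv : u ≤ v) :
    A *ᵥ u ≤ A *ᵥ v :=
  fun i => dotProduct_le_dotProduct_of_nonneg_left huv (hA i)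

lemma mulVec_nonneg_of_nonneg [Semiring R] [PartialOrder R] [IsOrderedRing R]
    {A : Matrix n n R} (hA : ∀ i j, 0 ≤ A i j) {v : n → R} (hv : 0 ≤ v) : 0 ≤ A *ᵥ v :=
  fun i => dotProduct_nonneg_of_nonneg (hA i) hv

lemma mulVec_apply_pos [Semiring R] [PartialOrder R] [IsStrictOrderedRing R]
    {A : Matrix n n R} (hA : ∀ i j, 0 ≤ A i j) {v : n → R} (hv : 0 ≤ v) {i j : n}
    (hAij : 0 < A i j) (hvj : 0 < v j) : 0 < (A *ᵥ v) i :=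
  sum_pos' (fun k _ => mul_nonneg (hA i k) (hv k)) ⟨j, mem_univ j, mul_pos hAij hvj⟩

lemma pow_mulVec_eq_smul [DecidableEq n] [CommSemiring R] {A : Matrix n n R} {v : n → R}
    {μ : R} (hv : A *ᵥ v = μ • v) (k : ℕ) : A ^ k *ᵥ v = μ ^ k • v := by
  induction k with
  | zero => simp
  | succ k ih => rw [pow_succ, ← mulVec_mulVec, hv, mulVec_smul, ih, smul_smul, pow_succ']

lemma eq_pow_mulVec_add_sum [DecidableEq n] [Semiring R] {A : Matrix n n R} {X Y : n → R}
    (h : X = A *ᵥ X + Y) (k : ℕ) :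
    X = A ^ k *ᵥ X + ∑ m ∈ range k, A ^ m *ᵥ Y := by
  induction k with
  | zero => simp
  | succ k ih =>
    conv_lhs => rw [ih]
    conv_lhs => rw [h]
    rw [mulVec_add, pow_succ, ← mulVec_mulVec, sum_range_succ, add_assoc, add_comm (A ^ k *ᵥ Y)]

lemma exists_pow_mulVec_lt_of_eq_mulVec_add [DecidableEq n] [Ring R] [LinearOrder R]
    [IsStrictOrderedRing R] {A : Matrix n n R} (hA : ∀ i j, 0 ≤ A i j) {X Y : n → R}
    (hY : 0 ≤ Y) (hreach : ∀ i, ∃ k, 0 < (A ^ k *ᵥ Y) i) (h : X = A *ᵥ X + Y) :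
    ∃ N, ∀ i, (A ^ N *ᵥ X) i < X i := by
  choose k hk using hreach
  refine ⟨univ.sup k + 1, fun i => ?_⟩
  have hterm : ∀ m, 0 ≤ A ^ m *ᵥ Y := fun m => mulVec_nonneg_of_nonneg (pow_apply_nonneg hA m) hY
  have hki : k i ∈ range (univ.sup k + 1) := mem_range.2 (Nat.lt_succ_of_le (le_sup (mem_univ i)))
  have hsum : 0 < (∑ m ∈ range (univ.sup k + 1), A ^ m *ᵥ Y) i := by
    rw [Finset.sum_apply]
    exact sum_pos' (fun m _ => hterm m i) ⟨k i, hki, hk i⟩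
  calc (A ^ (univ.sup k + 1) *ᵥ X) i
      < (A ^ (univ.sup k + 1) *ᵥ X) i + (∑ m ∈ range (univ.sup k + 1), A ^ m *ᵥ Y) i :=
        lt_add_of_pos_right _ hsum
    _ = X i := (congrFun (eq_pow_mulVec_add_sum h _) i).symm

lemma lt_one_of_smul_le_mulVec [Field R] [LinearOrder R] [IsStrictOrderedRing R]
    {A : Matrix n n R} (hA : ∀ i j, 0 ≤ A i j) {X w : n → R} (hX : ∀ i, 0 < X i)
    (hAX : ∀ i, (A *ᵥ X) i < X i) (hw : 0 ≤ w) (hw0 : w ≠ 0) {r : R}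
    (hrw : r • w ≤ A *ᵥ w) : r < 1 := by
  obtain ⟨i₀, hi₀⟩ := Function.ne_iff.mp hw0
  obtain ⟨j, -, hj⟩ := exists_max_image univ (fun i => w i / X i) ⟨i₀, mem_univ i₀⟩
  set c := w j / X j
  have hc : 0 < c :=
    (div_pos ((hw i₀).lt_of_ne' hi₀) (hX i₀)).trans_le (hj i₀ (mem_univ i₀))
  have hwc : w ≤ c • X := fun i => (div_le_iff₀ (hX i)).1 (hj i (mem_univ i))
  have hwj : w j = c * X j := (div_mul_cancel₀ _ (hX j).ne').symm
  have : r * w j < 1 * w j := calc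
    r * w j ≤ (A *ᵥ w) j := hrw j
    _ ≤ (A *ᵥ (c • X)) j := mulVec_le_mulVec_of_nonneg hA hwc j
    _ = c * (A *ᵥ X) j := by rw [mulVec_smul, Pi.smul_apply, smul_eq_mul]
    _ < c * X j := mul_lt_mul_of_pos_left (hAX j) hc
    _ = 1 * w j := by rw [one_mul, hwj]
  exact lt_of_mul_lt_mul_right this (hw j)

lemma norm_map_ofReal_mulVec_le (A : Matrix n n ℝ) (hA : ∀ i j, 0 ≤ A i j) (v : n → ℂ) (i : n) :
    ‖(A.map Complex.ofReal *ᵥ v) i‖ ≤ (A *ᵥ fun j => ‖v j‖) i := calc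
  ‖(A.map Complex.ofReal *ᵥ v) i‖ ≤ ∑ j, ‖(A i j : ℂ) * v j‖ := norm_sum_le _ _
  _ = (A *ᵥ fun j => ‖v j‖) i := by
    simp only [norm_mul, Complex.norm_real, Real.norm_of_nonneg (hA i _)]; rfl

lemma norm_lt_one_of_map_ofReal_mulVec_eq_smul {A : Matrix n n ℝ} (hA : ∀ i j, 0 ≤ A i j)
    {X : n → ℝ} (hX : ∀ i, 0 < X i) (hAX : ∀ i, (A *ᵥ X) i < X i) {v : n → ℂ} (hv0 : v ≠ 0)
    {μ : ℂ} (hv : A.map Complex.ofReal *ᵥ v = μ • v) : ‖μ‖ < 1 := by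
  refine lt_one_of_smul_le_mulVec hA hX hAX (fun i => norm_nonneg (v i)) ?_ fun i => ?_
  · exact fun h => hv0 (funext fun i => norm_eq_zero.1 (congrFun h i))
  · simpa [hv, norm_mul] using norm_map_ofReal_mulVec_le A hA v i

lemma isUnit_one_sub_of_mulVec_eq_self [DecidableEq n] [Field R] {A : Matrix n n R}
    (h : ∀ v, A *ᵥ v = v → v = 0) : IsUnit (1 - A) := by
  refine (isUnit_iff_isUnit_det _).2 (isUnit_iff_ne_zero.2 fun hdet => ?_)
  obtain ⟨v, hv0, hv⟩ := exists_mulVec_eq_zero_iff.2 hdet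
  rw [sub_mulVec, one_mulVec, sub_eq_zero] at hv
  exact hv0 (h v hv.symm)

lemma eq_inv_mulVec_of_mulVec_eq [DecidableEq n] [CommRing R] {A : Matrix n n R}
    (hA : IsUnit A) {X Y : n → R} (h : A *ᵥ X = Y) : X = A⁻¹ *ᵥ Y := by
  rw [← h, mulVec_mulVec, nonsing_inv_mul _ ((isUnit_iff_isUnit_det A).1 hA), one_mulVec]

lemma one_sub_mulVec_eq_of_eq_mulVec_add [DecidableEq n] [Ring R] {A : Matrix n n R}
    {X Y : n → R} (h : X = A *ᵥ X + Y) : (1 - A) *ᵥ X = Y := by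
  rw [sub_mulVec, one_mulVec, sub_eq_iff_eq_add', ← h]

end Matrix

open Matrix in
theorem linear_probability_equations_unique_solution {K : ℕ}
    (M : Matrix (Fin K) (Fin K) ℝ) (hM : ∀ i j, 0 ≤ M i j)
    (hirr : ∀ i j, ∃ k : ℕ, 1 ≤ k ∧ 0 < (M ^ k) i j)
    (X : Fin K → ℝ) (hX : ∀ i, 0 < X i)
    (Y : Fin K → ℝ) (hY : ∀ i, 0 ≤ Y i) (hY0 : Y ≠ 0)
    (heq : X = M.mulVec X + Y) :
    (∀ lam : ℂ,
      (∃ v : Fin K → ℂ, v ≠ 0 ∧ (M.map Complex.ofReal).mulVec v = lam • v) →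
      ‖lam‖ < 1) ∧
    IsUnit (1 - M) ∧
    X = (1 - M)⁻¹.mulVec Y ∧
    ∀ Z : Fin K → ℝ, Z = M.mulVec Z + Y → Z = X := by
  obtain ⟨i₀, hi₀⟩ : ∃ i, 0 < Y i := by
    by_contra! h
    exact hY0 (funext fun i => le_antisymm (h i) (hY i))
  have hreach : ∀ i, ∃ k, 0 < (M ^ k *ᵥ Y) i := fun i =>
    (hirr i i₀).imp fun k hk => mulVec_apply_pos (pow_apply_nonneg hM k) hY hk.2 hi₀
  obtain ⟨N, hN⟩ := exists_pow_mulVec_lt_of_eq_mulVec_add hM hY hreach heq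
  have heig : ∀ lam : ℂ, (∃ v : Fin K → ℂ, v ≠ 0 ∧ M.map Complex.ofReal *ᵥ v = lam • v) →
      ‖lam‖ < 1 := by
    rintro lam ⟨v, hv0, hv⟩
    have hvN : (M ^ N).map Complex.ofReal *ᵥ v = lam ^ N • v := by
      rw [← pow_mulVec_eq_smul hv N]
      exact congrArg (· *ᵥ v) (M.map_pow Complex.ofRealHom N)
    refine lt_of_pow_lt_pow_left₀ N zero_le_one ?_
    rw [one_pow, ← norm_pow]
    exact norm_lt_one_of_map_ofReal_mulVec_eq_smul (pow_apply_nonneg hM N) hX hN hv0 hvN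
  have hunit : IsUnit (1 - M) := isUnit_one_sub_of_mulVec_eq_self fun v hv => by
    by_contra hv0
    refine lt_irrefl 1 (norm_one (α := ℂ) ▸ heig 1 ⟨Complex.ofReal ∘ v, ?_, ?_⟩)
    · exact fun h => hv0 (funext fun i => Complex.ofReal_eq_zero.1 (congrFun h i))
    · funext i
      rw [one_smul]
      conv_rhs => rw [← hv]
      exact (RingHom.map_mulVec Complex.ofRealHom M v i).symm
  have hsol : ∀ Z, Z = M *ᵥ Z + Y → Z = (1 - M)⁻¹ *ᵥ Y := fun Z hZ =>
    eq_inv_mulVec_of_mulVec_eq hunit (one_sub_mulVec_eq_of_eq_mulVec_add hZ)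
  exact ⟨heig, hunit, hsol X heq, fun Z hZ => (hsol Z hZ).trans (hsol X heq).symm⟩
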